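/- Let l be C³ near t_n with l(t_n) > 0, let v_n be large, and suppose t_{n+1} − t_n = 2l_n/v_n + 2 l_n l'_n/v_n² + (2 l_n (l'_n)² + 2 l_n² l''_n)/v_n³ + O(v_n^{−4}), where l_n = l(t_n) etc. Define I_n = l_n v_n + l_n l'_n + l_n² l''_n/(3 v_n). Then ∫_{t_n}^{t_{n+1}} l(s)^{−2} ds = 2/I_n + O(v_n^{−4}). -/

import Mathlib

open Filter Asymptotics intervalIntegral

lemma isBigO_pow_succ_of_hasDerivAt {F G : ℝ → ℝ} {m : ℕ}
    (hF0 : F 0 = 0)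
    (hFd : ∀ᶠ h in nhds (0:ℝ), HasDerivAt F (G h) h)
    (hG : G =O[nhds (0:ℝ)] fun h => h ^ m) :
    F =O[nhds (0:ℝ)] fun h => h ^ (m+1) := by
  obtain ⟨C, hC0, hC⟩ := hG.exists_nonneg
  have hev := hFd.and hC.bound
  rw [Metric.eventually_nhds_iff] at hev
  obtain ⟨ε, hε, hP⟩ := hev
  apply IsBigO.of_bound C
  rw [Metric.eventually_nhds_iff]
  refine ⟨ε, hε, fun {h} hh => ?_⟩
  have hhlt : |h| < ε := by simpa [Real.dist_eq] using hh
  have habs : ∀ y ∈ Set.uIcc (0:ℝ) h, |y| ≤ |h| := by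
    intro y hy
    rcases Set.mem_uIcc.mp hy with ⟨h1, h2⟩ | ⟨h1, h2⟩
    · calc |y| = y := abs_of_nonneg h1
        _ ≤ h := h2
        _ ≤ |h| := le_abs_self h
    · calc |y| = -y := abs_of_nonpos h2
        _ ≤ -h := neg_le_neg h1
        _ ≤ |h| := neg_le_abs h
  have hmem : ∀ y ∈ Set.uIcc (0:ℝ) h, dist y 0 < ε := fun y hy => by
    rw [Real.dist_eq, sub_zero]; exact lt_of_le_of_lt (habs y hy) hhlt
  have key := (convex_uIcc (0:ℝ) h).norm_image_sub_le_of_norm_hasDerivWithin_le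
    (f := F) (f' := G) (C := C * |h| ^ m)
    (fun y hy => ((hP (hmem y hy)).1).hasDerivWithinAt)
    (fun y hy => by
      calc ‖G y‖ ≤ C * ‖y ^ m‖ := (hP (hmem y hy)).2
        _ = C * |y| ^ m := by rw [Real.norm_eq_abs, abs_pow]
        _ ≤ C * |h| ^ m := by
            have := pow_le_pow_left₀ (abs_nonneg y) (habs y hy) m
            exact mul_le_mul_of_nonneg_left this hC0)
    Set.left_mem_uIcc Set.right_mem_uIcc
  calc ‖F h‖ = ‖F h - F 0‖ := by rw [hF0, sub_zero]
    _ ≤ C * |h| ^ m * ‖h - 0‖ := key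
    _ = C * ‖h ^ (m+1)‖ := by
        rw [sub_zero, Real.norm_eq_abs, Real.norm_eq_abs, abs_pow, pow_succ]; ring

set_option maxHeartbeats 2000000 in
/-- Key cancellation in Lemma 4.1: with the three-term expansion of the
inter-collision time, the angle increment satisfies
`∫_{t₀}^{τ v} l(s)⁻² ds = 2 / I(v) + O(v⁻⁴)` where
`I(v) = l v + l l' + l² l''/(3v)`. -/
theorem adiabatic_invariant_integral (l : ℝ → ℝ) (t₀ : ℝ)
    (hl : ContDiffAt ℝ 3 l t₀) (hpos : 0 < l t₀)
    (τ : ℝ → ℝ)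
    (hτ : (fun v : ℝ => τ v - t₀ -
        (2 * l t₀ / v + 2 * l t₀ * deriv l t₀ / v ^ 2 +
          (2 * l t₀ * (deriv l t₀) ^ 2 + 2 * (l t₀) ^ 2 * iteratedDeriv 2 l t₀) / v ^ 3))
      =O[atTop] fun v : ℝ => (v ^ 4)⁻¹) :
    (fun v : ℝ => (∫ s in t₀..τ v, ((l s) ^ 2)⁻¹) -
        2 / (l t₀ * v + l t₀ * deriv l t₀ + (l t₀) ^ 2 * iteratedDeriv 2 l t₀ / (3 * v)))
      =O[atTop] fun v : ℝ => (v ^ 4)⁻¹ := by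
  set c := l t₀ with hc_def
  set p := deriv l t₀ with hp_def
  set q := iteratedDeriv 2 l t₀ with hq_def
  have hcne : c ≠ 0 := hpos.ne'
  -- an open convex neighborhood where l is C³ and positive
  obtain ⟨U₀, hU₀mem, hlU₀⟩ := hl.contDiffOn le_rfl (by simp)
  have hposev : ∀ᶠ t in nhds t₀, 0 < l t :=
    hl.continuousAt.eventually (eventually_gt_nhds hpos)
  obtain ⟨ε₀, hε₀, hball⟩ := Metric.mem_nhds_iff.mp (Filter.inter_mem hU₀mem hposev)
  set U : Set ℝ := Metric.ball t₀ ε₀ with hU_def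
  have hUopen : IsOpen U := Metric.isOpen_ball
  have ht₀U : t₀ ∈ U := Metric.mem_ball_self hε₀
  have hUconv : Convex ℝ U := convex_ball t₀ ε₀
  have hlU : ContDiffOn ℝ 3 l U := hlU₀.mono (fun t ht => (hball ht).1)
  have hlpos : ∀ t ∈ U, 0 < l t := fun t ht => (hball ht).2
  have hlne : ∀ t ∈ U, l t ≠ 0 := fun t ht => (hlpos t ht).ne'
  have h13 : (1 : WithTop ℕ∞) ≤ 3 := by norm_num
  have h23 : (2 : WithTop ℕ∞) ≤ 3 := by norm_num
  have hdla : ∀ t ∈ U, DifferentiableAt ℝ l t := fun t ht =>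
    ((hlU.differentiableOn (by norm_num)).differentiableAt (hUopen.mem_nhds ht))
  have hdl : ContDiffOn ℝ 2 (deriv l) U := hlU.deriv_of_isOpen hUopen (by norm_num)
  have hdla' : ∀ t ∈ U, DifferentiableAt ℝ (deriv l) t := fun t ht =>
    ((hdl.differentiableOn (by norm_num)).differentiableAt (hUopen.mem_nhds ht))
  -- the integrand and its first derivative
  set φ : ℝ → ℝ := fun t => ((l t) ^ 2)⁻¹ with hφ_def
  set ψ : ℝ → ℝ := fun t => -(2 * l t * deriv l t) / (l t ^ 2) ^ 2 with hψ_def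
  have hφU : ContDiffOn ℝ 3 φ U :=
    (hlU.pow 2).inv (fun t ht => pow_ne_zero 2 (hlne t ht))
  have hφψ : ∀ t ∈ U, HasDerivAt φ (ψ t) t := by
    intro t ht
    have h1 : HasDerivAt (fun s => l s ^ 2) (2 * l t ^ 1 * deriv l t) t :=
      (hdla t ht).hasDerivAt.pow 2
    have h2 := h1.inv (pow_ne_zero 2 (hlne t ht))
    show HasDerivAt (fun s => l s ^ 2)⁻¹ (ψ t) t
    simpa [hψ_def, pow_one] using h2
  have hψU : ContDiffOn ℝ 2 ψ U := by
    apply ContDiffOn.div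
    · exact ((contDiffOn_const.mul (hlU.of_le h23)).mul hdl).neg
    · exact (((hlU.of_le h23).pow 2).pow 2)
    · exact fun t ht => pow_ne_zero 2 (pow_ne_zero 2 (hlne t ht))
  have hψdiff : ∀ t ∈ U, DifferentiableAt ℝ ψ t := fun t ht =>
    ((hψU.differentiableOn (by norm_num)).differentiableAt (hUopen.mem_nhds ht))
  have hdψ : ContDiffOn ℝ 1 (deriv ψ) U := hψU.deriv_of_isOpen hUopen (by norm_num)
  have hdψdiff : DifferentiableAt ℝ (deriv ψ) t₀ :=
    ((hdψ.differentiableOn (by norm_num)).differentiableAt (hUopen.mem_nhds ht₀U))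
  -- derivative values at t₀
  have hp' : HasDerivAt l p t₀ := (hdla t₀ ht₀U).hasDerivAt
  have hq' : HasDerivAt (deriv l) q t₀ := by
    have h1 := (hdla' t₀ ht₀U).hasDerivAt
    have h2 : deriv (deriv l) t₀ = q := by
      rw [hq_def, iteratedDeriv_succ, iteratedDeriv_one]
    rwa [h2] at h1
  set E : ℝ := 6 * p ^ 2 / c ^ 4 - 2 * q / c ^ 3 with hE_def
  have hψE : HasDerivAt ψ E t₀ := by
    have hN : HasDerivAt (fun t => -(2 * l t * deriv l t))
        (-((2 * p) * deriv l t₀ + (2 * l t₀) * q)) t₀ :=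
      ((hp'.const_mul 2).mul hq').neg
    have hD : HasDerivAt (fun t => (l t ^ 2) ^ 2)
        (2 * (l t₀ ^ 2) ^ 1 * (2 * l t₀ ^ 1 * p)) t₀ := (hp'.pow 2).pow 2
    have h2 := hN.div hD (pow_ne_zero 2 (pow_ne_zero 2 hcne))
    convert h2 using 1
    case e'_4 => rfl
    case e'_5 => rfl
    case e'_8 => rfl
    rw [hE_def, ← hc_def, ← hp_def]
    field_simp
    ring
  -- FTC for the integral function g
  set g : ℝ → ℝ := fun t => ∫ s in t₀..t, ((l s) ^ 2)⁻¹ with hg_def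
  have hφcont : ContinuousOn φ U := hφU.continuousOn
  have hgderiv : ∀ t ∈ U, HasDerivAt g (φ t) t := by
    intro t ht
    apply intervalIntegral.integral_hasDerivAt_right
    · exact (hφcont.mono (hUconv.ordConnected.uIcc_subset ht₀U ht)).intervalIntegrable
    · exact ContinuousOn.stronglyMeasurableAtFilter hUopen hφcont t ht
    · exact hφcont.continuousAt (hUopen.mem_nhds ht)
  have hg0 : g t₀ = 0 := intervalIntegral.integral_same
  -- Taylor coefficients
  set A : ℝ := φ t₀ with hA_def
  set B : ℝ := ψ t₀ with hB_def
  -- eventual membership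
  have htend0 : Filter.Tendsto (fun h : ℝ => t₀ + h) (nhds 0) (nhds t₀) := by
    have hcont : ContinuousAt (fun h : ℝ => t₀ + h) 0 := by fun_prop
    simpa using hcont.tendsto
  have hevU : ∀ᶠ h in nhds (0:ℝ), t₀ + h ∈ U := htend0.eventually (hUopen.mem_nhds ht₀U)
  -- Taylor chain
  have L0 : (fun h : ℝ => deriv ψ (t₀ + h) - E) =O[nhds 0] fun h => h ^ 1 := by
    have h1 := hdψdiff.isBigO_sub.comp_tendsto htend0
    have h2 : (fun h : ℝ => deriv ψ (t₀ + h) - deriv ψ t₀) =O[nhds 0] fun h => h ^ 1 := by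
      simpa [Function.comp_def, add_sub_cancel_left] using h1
    rwa [show deriv ψ t₀ = E from hψE.deriv] at h2
  have L1 : (fun h : ℝ => ψ (t₀ + h) - B - E * h) =O[nhds 0] fun h => h ^ 2 := by
    apply isBigO_pow_succ_of_hasDerivAt (G := fun h => deriv ψ (t₀ + h) - E)
    · simp [hB_def]
    · filter_upwards [hevU] with h hmem
      have h1 : HasDerivAt (fun x : ℝ => ψ (t₀ + x)) (deriv ψ (t₀ + h) * 1) h :=
        ((hψdiff _ hmem).hasDerivAt).comp h ((hasDerivAt_id h).const_add t₀)
      have h2 : HasDerivAt (fun x : ℝ => ψ (t₀ + x) - B - E * x)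
          (deriv ψ (t₀ + h) * 1 - 0 - E * 1) h :=
        (h1.sub_const B).sub ((hasDerivAt_id h).const_mul E) |>.congr_deriv (by ring)
      simpa using h2
    · exact L0
  have L2 : (fun h : ℝ => φ (t₀ + h) - A - B * h - E / 2 * h ^ 2) =O[nhds 0] fun h => h ^ 3 := by
    apply isBigO_pow_succ_of_hasDerivAt (G := fun h => ψ (t₀ + h) - B - E * h)
    · simp [hA_def]
    · filter_upwards [hevU] with h hmem
      have h1 : HasDerivAt (fun x : ℝ => φ (t₀ + x)) (ψ (t₀ + h) * 1) h :=
        (hφψ _ hmem).comp h ((hasDerivAt_id h).const_add t₀)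
      have h3 := ((h1.sub_const A).sub ((hasDerivAt_id h).const_mul B)).sub
        ((hasDerivAt_pow 2 h).const_mul (E / 2))
      exact h3.congr_deriv (by ring)
    · exact L1
  have L3 : (fun h : ℝ => g (t₀ + h) - A * h - B / 2 * h ^ 2 - E / 6 * h ^ 3)
      =O[nhds 0] fun h => h ^ 4 := by
    apply isBigO_pow_succ_of_hasDerivAt
      (G := fun h => φ (t₀ + h) - A - B * h - E / 2 * h ^ 2)
    · simp [hg0]
    · filter_upwards [hevU] with h hmem
      have h1 : HasDerivAt (fun x : ℝ => g (t₀ + x)) (φ (t₀ + h) * 1) h :=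
        (hgderiv _ hmem).comp h ((hasDerivAt_id h).const_add t₀)
      have h3 := ((h1.sub ((hasDerivAt_id h).const_mul A)).sub
        ((hasDerivAt_pow 2 h).const_mul (B / 2))).sub
        ((hasDerivAt_pow 3 h).const_mul (E / 6))
      exact h3.congr_deriv (by ring)
    · exact L2
  -- asymptotic setup
  set h₁ : ℝ → ℝ := fun v => τ v - t₀ with hh₁_def
  set h₀f : ℝ → ℝ := fun v =>
    2 * c / v + 2 * c * p / v ^ 2 + (2 * c * p ^ 2 + 2 * c ^ 2 * q) / v ^ 3 with hh₀_def
  have hτ' : (fun v => h₁ v - h₀f v) =O[atTop] fun v : ℝ => (v ^ 4)⁻¹ := hτ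
  have hinv : Filter.Tendsto (fun v : ℝ => v⁻¹) atTop (nhds 0) := tendsto_inv_atTop_zero
  have hw : Filter.Tendsto (fun v : ℝ => 2 * c + (2 * c * p * v⁻¹ +
      (2 * c * p ^ 2 + 2 * c ^ 2 * q) * (v⁻¹ * v⁻¹))) atTop (nhds (2 * c)) := by
    have h1 := (hinv.const_mul (2 * c * p)).add
      ((hinv.mul hinv).const_mul (2 * c * p ^ 2 + 2 * c ^ 2 * q))
    have h2 := (tendsto_const_nhds (x := 2 * c) (f := atTop (α := ℝ))).add h1
    simpa using h2
  have hh₀eq : h₀f = fun v => v⁻¹ * (2 * c + (2 * c * p * v⁻¹ +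
      (2 * c * p ^ 2 + 2 * c ^ 2 * q) * (v⁻¹ * v⁻¹))) := by
    funext v; rw [hh₀_def]; ring
  have hh₀big : h₀f =O[atTop] fun v : ℝ => v⁻¹ := by
    rw [hh₀eq]
    simpa using (isBigO_refl (fun v : ℝ => v⁻¹) atTop).mul (hw.isBigO_one ℝ)
  have hh₀0 : Filter.Tendsto h₀f atTop (nhds 0) := hh₀big.trans_tendsto hinv
  have hv4le : (fun v : ℝ => (v ^ 4)⁻¹) =O[atTop] fun v : ℝ => v⁻¹ := by
    apply IsBigO.of_bound 1
    filter_upwards [Filter.eventually_ge_atTop (1:ℝ)] with v hv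
    have hv0 : (0:ℝ) < v := lt_of_lt_of_le one_pos hv
    rw [Real.norm_eq_abs, Real.norm_eq_abs, abs_inv, abs_inv, abs_pow, abs_of_pos hv0, one_mul]
    apply inv_anti₀ hv0
    calc v = v ^ 1 := (pow_one v).symm
      _ ≤ v ^ 4 := pow_le_pow_right₀ hv (by norm_num)
  have hh₁big : h₁ =O[atTop] fun v : ℝ => v⁻¹ := by
    have h2 := (hτ'.trans hv4le).add hh₀big
    exact h2.congr_left fun v => by ring
  have hh₁0 : Filter.Tendsto h₁ atTop (nhds 0) := hh₁big.trans_tendsto hinv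
  have hh₁4 : (fun v => (h₁ v) ^ 4) =O[atTop] fun v : ℝ => (v ^ 4)⁻¹ := by
    have := hh₁big.pow 4
    simpa [inv_pow] using this
  -- Piece 1: Taylor remainder along τ
  have P1 : (fun v => g (τ v) - (A * h₁ v + B / 2 * (h₁ v) ^ 2 + E / 6 * (h₁ v) ^ 3))
      =O[atTop] fun v : ℝ => (v ^ 4)⁻¹ := by
    have hcomp := L3.comp_tendsto hh₁0
    have h1 : (fun v => g (t₀ + h₁ v) - A * h₁ v - B / 2 * (h₁ v) ^ 2 - E / 6 * (h₁ v) ^ 3)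
        =O[atTop] fun v => (h₁ v) ^ 4 := by
      simpa [Function.comp_def] using hcomp
    have h2 := h1.trans hh₁4
    refine h2.congr_left fun v => ?_
    rw [hh₁_def]
    rw [show t₀ + (τ v - t₀) = τ v from by ring]
    ring
  -- Piece 2: replacing the exact time by its expansion
  have hBv : Filter.Tendsto (fun v => A + B / 2 * (h₁ v + h₀f v)
      + E / 6 * ((h₁ v) ^ 2 + h₁ v * h₀f v + (h₀f v) ^ 2)) atTop
      (nhds (A + B / 2 * (0 + 0) + E / 6 * (0 ^ 2 + 0 * 0 + 0 ^ 2))) := by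
    refine Filter.Tendsto.add (Filter.Tendsto.add tendsto_const_nhds ?_) ?_
    · exact ((hh₁0.add hh₀0).const_mul (B / 2))
    · exact (((hh₁0.pow 2).add (hh₁0.mul hh₀0)).add (hh₀0.pow 2)).const_mul (E / 6)
  have P2 : (fun v => (A * h₁ v + B / 2 * (h₁ v) ^ 2 + E / 6 * (h₁ v) ^ 3)
      - (A * h₀f v + B / 2 * (h₀f v) ^ 2 + E / 6 * (h₀f v) ^ 3))
      =O[atTop] fun v : ℝ => (v ^ 4)⁻¹ := by
    have h2 := hτ'.mul (hBv.isBigO_one ℝ)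
    have h3 : (fun v => (h₁ v - h₀f v) * (A + B / 2 * (h₁ v + h₀f v)
        + E / 6 * ((h₁ v) ^ 2 + h₁ v * h₀f v + (h₀f v) ^ 2)))
        =O[atTop] fun v : ℝ => (v ^ 4)⁻¹ := by simpa using h2
    exact h3.congr_left fun v => by ring
  -- Piece 3: the algebraic cancellation
  set K : ℝ → ℝ := fun v => 3 * c * v ^ 2 + 3 * c * p * v + c ^ 2 * q with hK_def
  have hDtend : Filter.Tendsto (fun v : ℝ => 3 * c + (3 * c * p * v⁻¹ +
      c ^ 2 * q * (v⁻¹ * v⁻¹))) atTop (nhds (3 * c)) := by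
    have h1 := (hinv.const_mul (3 * c * p)).add ((hinv.mul hinv).const_mul (c ^ 2 * q))
    have h2 := (tendsto_const_nhds (x := 3 * c) (f := atTop (α := ℝ))).add h1
    simpa using h2
  have hKpos : ∀ᶠ v : ℝ in atTop, 0 < K v := by
    have h3c : (0:ℝ) < 3 * c := by linarith
    filter_upwards [hDtend.eventually (eventually_gt_nhds h3c),
      Filter.eventually_gt_atTop (0:ℝ)] with v hD hv
    have hveq : K v = v ^ 2 * (3 * c + (3 * c * p * v⁻¹ + c ^ 2 * q * (v⁻¹ * v⁻¹))) := by
      rw [hK_def]; field_simp; ring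
    rw [hveq]; exact mul_pos (by positivity) hD
  set Qf : ℝ → ℝ := fun u =>
      ((126) * c ^ 4 * p ^ 3 +
        (-156) * c ^ 5 * p * q +
        (468) * c ^ 4 * p ^ 4 * u +
        (-138) * c ^ 5 * p ^ 2 * q * u +
        (-74) * c ^ 6 * q ^ 2 * u +
        (828) * c ^ 4 * p ^ 5 * u ^ 2 +
        (228) * c ^ 5 * p ^ 3 * q * u ^ 2 +
        (-300) * c ^ 6 * p * q ^ 2 * u ^ 2 +
        (900) * c ^ 4 * p ^ 6 * u ^ 3 +
        (816) * c ^ 5 * p ^ 4 * q * u ^ 3 +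
        (-180) * c ^ 6 * p ^ 2 * q ^ 2 * u ^ 3 +
        (-96) * c ^ 7 * q ^ 3 * u ^ 3 +
        (648) * c ^ 4 * p ^ 7 * u ^ 4 +
        (1020) * c ^ 5 * p ^ 5 * q * u ^ 4 +
        (136) * c ^ 6 * p ^ 3 * q ^ 2 * u ^ 4 +
        (-204) * c ^ 7 * p * q ^ 3 * u ^ 4 +
        (288) * c ^ 4 * p ^ 8 * u ^ 5 +
        (696) * c ^ 5 * p ^ 6 * q * u ^ 5 +
        (384) * c ^ 6 * p ^ 4 * q ^ 2 * u ^ 5 +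
        (-72) * c ^ 7 * p ^ 2 * q ^ 3 * u ^ 5 +
        (-48) * c ^ 8 * q ^ 4 * u ^ 5 +
        (72) * c ^ 4 * p ^ 9 * u ^ 6 +
        (264) * c ^ 5 * p ^ 7 * q * u ^ 6 +
        (264) * c ^ 6 * p ^ 5 * q ^ 2 * u ^ 6 +
        (24) * c ^ 7 * p ^ 3 * q ^ 3 * u ^ 6 +
        (-48) * c ^ 8 * p * q ^ 4 * u ^ 6 +
        (24) * c ^ 5 * p ^ 8 * q * u ^ 7 +
        (64) * c ^ 6 * p ^ 6 * q ^ 2 * u ^ 7 +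
        (48) * c ^ 7 * p ^ 4 * q ^ 3 * u ^ 7 +
        (-8) * c ^ 9 * q ^ 5 * u ^ 7) /
      (3 * c ^ 4 * (3 * c + 3 * c * p * u + c ^ 2 * q * u ^ 2)) with hQf_def
  have hQcont : ContinuousAt Qf 0 := by
    rw [hQf_def]
    apply ContinuousAt.div
    · fun_prop
    · fun_prop
    · have heq9 : (3:ℝ) * c ^ 4 * (3 * c + 3 * c * p * 0 + c ^ 2 * q * 0 ^ 2) = 9 * c ^ 5 := by
        ring
      rw [heq9]
      exact mul_ne_zero (by norm_num) (pow_ne_zero 5 hcne)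
  have hQtend : Filter.Tendsto (fun v : ℝ => Qf v⁻¹) atTop (nhds (Qf 0)) :=
    (hQcont.tendsto).comp hinv
  have hRbig : (fun v : ℝ => (v ^ 4)⁻¹ * Qf v⁻¹) =O[atTop] fun v : ℝ => (v ^ 4)⁻¹ := by
    simpa using (isBigO_refl (fun v : ℝ => (v ^ 4)⁻¹) atTop).mul (hQtend.isBigO_one ℝ)
  have hAval : A = (c ^ 2)⁻¹ := by simp only [hA_def, hφ_def, ← hc_def]
  have hBval : B = -(2 * c * p) / (c ^ 2) ^ 2 := by
    simp only [hB_def, hψ_def, ← hc_def, ← hp_def]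
  have hEqv : ∀ᶠ v : ℝ in atTop,
      (A * h₀f v + B / 2 * (h₀f v) ^ 2 + E / 6 * (h₀f v) ^ 3)
        - 2 / (c * v + c * p + c ^ 2 * q / (3 * v)) = (v ^ 4)⁻¹ * Qf v⁻¹ := by
    filter_upwards [hKpos, Filter.eventually_gt_atTop (0:ℝ)] with v hK hv
    have hvne : v ≠ 0 := hv.ne'
    have hkne : 3 * c * v ^ 2 + 3 * c * p * v + c ^ 2 * q ≠ 0 := by
      have h1 := hK.ne'
      simpa [hK_def] using h1
    have h6ne : (6:ℝ) * c ^ 4 * v ^ 9 ≠ 0 :=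
      mul_ne_zero (mul_ne_zero (by norm_num) (pow_ne_zero _ hcne)) (pow_ne_zero _ hvne)
    have h3ne : (3:ℝ) * c ^ 4 * v ^ 9 * (3 * c * v ^ 2 + 3 * c * p * v + c ^ 2 * q) ≠ 0 :=
      mul_ne_zero (mul_ne_zero (mul_ne_zero (by norm_num) (pow_ne_zero _ hcne))
        (pow_ne_zero _ hvne)) hkne
    have e1 : A * h₀f v + B / 2 * (h₀f v) ^ 2 + E / 6 * (h₀f v) ^ 3 =
        ((12) * c ^ 3 * v ^ 8 +
          (-12) * c ^ 3 * p * v ^ 7 +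
          (12) * c ^ 3 * p ^ 2 * v ^ 6 +
          (-4) * c ^ 4 * q * v ^ 6 +
          (72) * c ^ 3 * p ^ 3 * v ^ 5 +
          (-96) * c ^ 4 * p * q * v ^ 5 +
          (240) * c ^ 3 * p ^ 4 * v ^ 4 +
          (-48) * c ^ 5 * q ^ 2 * v ^ 4 +
          (312) * c ^ 3 * p ^ 5 * v ^ 3 +
          (128) * c ^ 4 * p ^ 3 * q * v ^ 3 +
          (-120) * c ^ 5 * p * q ^ 2 * v ^ 3 +
          (288) * c ^ 3 * p ^ 6 * v ^ 2 +
          (336) * c ^ 4 * p ^ 4 * q * v ^ 2 +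
          (-48) * c ^ 6 * q ^ 3 * v ^ 2 +
          (144) * c ^ 3 * p ^ 7 * v +
          (240) * c ^ 4 * p ^ 5 * q * v +
          (48) * c ^ 5 * p ^ 3 * q ^ 2 * v +
          (-48) * c ^ 6 * p * q ^ 3 * v +
          (48) * c ^ 3 * p ^ 8 +
          (128) * c ^ 4 * p ^ 6 * q +
          (96) * c ^ 5 * p ^ 4 * q ^ 2 +
          (-16) * c ^ 7 * q ^ 4) / (6 * c ^ 4 * v ^ 9) := by
      rw [hAval, hBval, hE_def]
      simp only [hh₀_def]
      field_simp
      ring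
    have e2 : 2 / (c * v + c * p + c ^ 2 * q / (3 * v)) =
        6 * v / (3 * c * v ^ 2 + 3 * c * p * v + c ^ 2 * q) := by
      rw [show c * v + c * p + c ^ 2 * q / (3 * v)
          = (3 * c * v ^ 2 + 3 * c * p * v + c ^ 2 * q) / (3 * v) from by field_simp]
      rw [div_div_eq_mul_div]
      ring_nf
    have e3 : (v ^ 4)⁻¹ * Qf v⁻¹ =
        ((126) * c ^ 4 * p ^ 3 * v ^ 7 +
          (-156) * c ^ 5 * p * q * v ^ 7 +
          (468) * c ^ 4 * p ^ 4 * v ^ 6 +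
          (-138) * c ^ 5 * p ^ 2 * q * v ^ 6 +
          (-74) * c ^ 6 * q ^ 2 * v ^ 6 +
          (828) * c ^ 4 * p ^ 5 * v ^ 5 +
          (228) * c ^ 5 * p ^ 3 * q * v ^ 5 +
          (-300) * c ^ 6 * p * q ^ 2 * v ^ 5 +
          (900) * c ^ 4 * p ^ 6 * v ^ 4 +
          (816) * c ^ 5 * p ^ 4 * q * v ^ 4 +
          (-180) * c ^ 6 * p ^ 2 * q ^ 2 * v ^ 4 +
          (-96) * c ^ 7 * q ^ 3 * v ^ 4 +
          (648) * c ^ 4 * p ^ 7 * v ^ 3 +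
          (1020) * c ^ 5 * p ^ 5 * q * v ^ 3 +
          (136) * c ^ 6 * p ^ 3 * q ^ 2 * v ^ 3 +
          (-204) * c ^ 7 * p * q ^ 3 * v ^ 3 +
          (288) * c ^ 4 * p ^ 8 * v ^ 2 +
          (696) * c ^ 5 * p ^ 6 * q * v ^ 2 +
          (384) * c ^ 6 * p ^ 4 * q ^ 2 * v ^ 2 +
          (-72) * c ^ 7 * p ^ 2 * q ^ 3 * v ^ 2 +
          (-48) * c ^ 8 * q ^ 4 * v ^ 2 +
          (72) * c ^ 4 * p ^ 9 * v +
          (264) * c ^ 5 * p ^ 7 * q * v +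
          (264) * c ^ 6 * p ^ 5 * q ^ 2 * v +
          (24) * c ^ 7 * p ^ 3 * q ^ 3 * v +
          (-48) * c ^ 8 * p * q ^ 4 * v +
          (24) * c ^ 5 * p ^ 8 * q +
          (64) * c ^ 6 * p ^ 6 * q ^ 2 +
          (48) * c ^ 7 * p ^ 4 * q ^ 3 +
          (-8) * c ^ 9 * q ^ 5) / (3 * c ^ 4 * v ^ 9 * (3 * c * v ^ 2 + 3 * c * p * v + c ^ 2 * q)) := by
      simp only [hQf_def]
      rw [show (3:ℝ) * c + 3 * c * p * v⁻¹ + c ^ 2 * q * v⁻¹ ^ 2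
          = (3 * c * v ^ 2 + 3 * c * p * v + c ^ 2 * q) / v ^ 2 from by field_simp]
      rw [show ((126) * c ^ 4 * p ^ 3 +
          (-156) * c ^ 5 * p * q +
          (468) * c ^ 4 * p ^ 4 * v⁻¹ +
          (-138) * c ^ 5 * p ^ 2 * q * v⁻¹ +
          (-74) * c ^ 6 * q ^ 2 * v⁻¹ +
          (828) * c ^ 4 * p ^ 5 * v⁻¹ ^ 2 +
          (228) * c ^ 5 * p ^ 3 * q * v⁻¹ ^ 2 +
          (-300) * c ^ 6 * p * q ^ 2 * v⁻¹ ^ 2 +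
          (900) * c ^ 4 * p ^ 6 * v⁻¹ ^ 3 +
          (816) * c ^ 5 * p ^ 4 * q * v⁻¹ ^ 3 +
          (-180) * c ^ 6 * p ^ 2 * q ^ 2 * v⁻¹ ^ 3 +
          (-96) * c ^ 7 * q ^ 3 * v⁻¹ ^ 3 +
          (648) * c ^ 4 * p ^ 7 * v⁻¹ ^ 4 +
          (1020) * c ^ 5 * p ^ 5 * q * v⁻¹ ^ 4 +
          (136) * c ^ 6 * p ^ 3 * q ^ 2 * v⁻¹ ^ 4 +
          (-204) * c ^ 7 * p * q ^ 3 * v⁻¹ ^ 4 +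
          (288) * c ^ 4 * p ^ 8 * v⁻¹ ^ 5 +
          (696) * c ^ 5 * p ^ 6 * q * v⁻¹ ^ 5 +
          (384) * c ^ 6 * p ^ 4 * q ^ 2 * v⁻¹ ^ 5 +
          (-72) * c ^ 7 * p ^ 2 * q ^ 3 * v⁻¹ ^ 5 +
          (-48) * c ^ 8 * q ^ 4 * v⁻¹ ^ 5 +
          (72) * c ^ 4 * p ^ 9 * v⁻¹ ^ 6 +
          (264) * c ^ 5 * p ^ 7 * q * v⁻¹ ^ 6 +
          (264) * c ^ 6 * p ^ 5 * q ^ 2 * v⁻¹ ^ 6 +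
          (24) * c ^ 7 * p ^ 3 * q ^ 3 * v⁻¹ ^ 6 +
          (-48) * c ^ 8 * p * q ^ 4 * v⁻¹ ^ 6 +
          (24) * c ^ 5 * p ^ 8 * q * v⁻¹ ^ 7 +
          (64) * c ^ 6 * p ^ 6 * q ^ 2 * v⁻¹ ^ 7 +
          (48) * c ^ 7 * p ^ 4 * q ^ 3 * v⁻¹ ^ 7 +
          (-8) * c ^ 9 * q ^ 5 * v⁻¹ ^ 7)
          = ((126) * c ^ 4 * p ^ 3 * v ^ 7 +
          (-156) * c ^ 5 * p * q * v ^ 7 +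
          (468) * c ^ 4 * p ^ 4 * v ^ 6 +
          (-138) * c ^ 5 * p ^ 2 * q * v ^ 6 +
          (-74) * c ^ 6 * q ^ 2 * v ^ 6 +
          (828) * c ^ 4 * p ^ 5 * v ^ 5 +
          (228) * c ^ 5 * p ^ 3 * q * v ^ 5 +
          (-300) * c ^ 6 * p * q ^ 2 * v ^ 5 +
          (900) * c ^ 4 * p ^ 6 * v ^ 4 +
          (816) * c ^ 5 * p ^ 4 * q * v ^ 4 +
          (-180) * c ^ 6 * p ^ 2 * q ^ 2 * v ^ 4 +
          (-96) * c ^ 7 * q ^ 3 * v ^ 4 +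
          (648) * c ^ 4 * p ^ 7 * v ^ 3 +
          (1020) * c ^ 5 * p ^ 5 * q * v ^ 3 +
          (136) * c ^ 6 * p ^ 3 * q ^ 2 * v ^ 3 +
          (-204) * c ^ 7 * p * q ^ 3 * v ^ 3 +
          (288) * c ^ 4 * p ^ 8 * v ^ 2 +
          (696) * c ^ 5 * p ^ 6 * q * v ^ 2 +
          (384) * c ^ 6 * p ^ 4 * q ^ 2 * v ^ 2 +
          (-72) * c ^ 7 * p ^ 2 * q ^ 3 * v ^ 2 +
          (-48) * c ^ 8 * q ^ 4 * v ^ 2 +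
          (72) * c ^ 4 * p ^ 9 * v +
          (264) * c ^ 5 * p ^ 7 * q * v +
          (264) * c ^ 6 * p ^ 5 * q ^ 2 * v +
          (24) * c ^ 7 * p ^ 3 * q ^ 3 * v +
          (-48) * c ^ 8 * p * q ^ 4 * v +
          (24) * c ^ 5 * p ^ 8 * q +
          (64) * c ^ 6 * p ^ 6 * q ^ 2 +
          (48) * c ^ 7 * p ^ 4 * q ^ 3 +
          (-8) * c ^ 9 * q ^ 5) / v ^ 7 from by field_simp]
      field_simp
    rw [e1, e2, e3, div_sub_div _ _ h6ne hkne, div_eq_div_iff (mul_ne_zero h6ne hkne) h3ne]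
    ring
  have hEqv' : (fun v : ℝ => (v ^ 4)⁻¹ * Qf v⁻¹) =ᶠ[atTop]
      (fun v => (A * h₀f v + B / 2 * (h₀f v) ^ 2 + E / 6 * (h₀f v) ^ 3)
        - 2 / (c * v + c * p + c ^ 2 * q / (3 * v))) := by
    filter_upwards [hEqv] with v hv
    exact hv.symm
  have P3 : (fun v => (A * h₀f v + B / 2 * (h₀f v) ^ 2 + E / 6 * (h₀f v) ^ 3)
      - 2 / (c * v + c * p + c ^ 2 * q / (3 * v))) =O[atTop] fun v : ℝ => (v ^ 4)⁻¹ :=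
    hRbig.congr' hEqv' Filter.EventuallyEq.rfl
  -- assemble
  have hsum := (P1.add P2).add P3
  refine hsum.congr_left fun v => ?_
  simp only [hg_def, hh₁_def, hh₀_def]
  ring
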